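/- arXiv:1211.4661 — 4 statements merged into one kernel-verified Lean document; each statement's English description precedes it below -/
import Mathlib

section
/- Let h : [0,1] → ℝ be twice continuously differentiable and K ≥ 0 a constant such that h''(t) ≥ -K·|h'(t)| for all t ∈ [0,1]. If h(0) ≤ 0 and h(1) ≤ 0, then h(t) ≤ 0 for all t ∈ [0,1]. -/
open Set Real

/-- One-dimensional maximum principle: if `h'' ≥ -K|h'|` on `[0,1]`, `h''` continuous,
and `h ≤ 0` at the endpoints, then `h ≤ 0` on all of `[0,1]`. -/
theorem stmt_0 (h h' h'' : ℝ → ℝ) (K : ℝ) (hK : 0 ≤ K)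
    (hd1 : ∀ t ∈ Set.Icc (0:ℝ) 1, HasDerivAt h (h' t) t)
    (hd2 : ∀ t ∈ Set.Icc (0:ℝ) 1, HasDerivAt h' (h'' t) t)
    (hcont : ContinuousOn h'' (Set.Icc (0:ℝ) 1))
    (hineq : ∀ t ∈ Set.Icc (0:ℝ) 1, h'' t ≥ -K * |h' t|)
    (h0 : h 0 ≤ 0) (h1 : h 1 ≤ 0) :
    ∀ t ∈ Set.Icc (0:ℝ) 1, h t ≤ 0 := by
  have hconth : ContinuousOn h (Set.Icc 0 1) := fun t ht =>
    (hd1 t ht).continuousAt.continuousWithinAt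
  have hconth' : ContinuousOn h' (Set.Icc 0 1) := fun t ht =>
    (hd2 t ht).continuousAt.continuousWithinAt
  intro t₀ ht₀
  by_contra hpos
  push_neg at hpos
  have ht0ne : t₀ ≠ 0 := by rintro rfl; linarith
  have ht1ne : t₀ ≠ 1 := by rintro rfl; linarith
  have ht₀' : t₀ ∈ Set.Ioo (0:ℝ) 1 :=
    ⟨lt_of_le_of_ne ht₀.1 (Ne.symm ht0ne), lt_of_le_of_ne ht₀.2 ht1ne⟩
  -- MVT on [t₀, 1] gives a point s with h' s < 0
  obtain ⟨s, hs, hslope⟩ := exists_hasDerivAt_eq_slope h h' ht₀'.2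
    (hconth.mono (Set.Icc_subset_Icc ht₀.1 le_rfl))
    (fun x hx => hd1 x ⟨le_of_lt (lt_trans ht₀'.1 hx.1), le_of_lt hx.2⟩)
  have hsmem : s ∈ Set.Icc (0:ℝ) 1 :=
    ⟨le_of_lt (lt_trans ht₀'.1 hs.1), le_of_lt hs.2⟩
  have hs_neg : h' s < 0 := by
    rw [hslope]
    apply div_neg_of_neg_of_pos <;> linarith [hs.2, ht₀'.2]
  -- Key lemma: h' < 0 on [0, s]
  have key : ∀ t ∈ Set.Icc (0:ℝ) s, h' t < 0 := by
    by_contra hcon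
    push_neg at hcon
    obtain ⟨u₀, hu₀, hu₀'⟩ := hcon
    set S : Set ℝ := {t ∈ Set.Icc (0:ℝ) s | 0 ≤ h' t} with hS
    have hSsub : S ⊆ Set.Icc (0:ℝ) s := fun x hx => hx.1
    have hIccsub : Set.Icc (0:ℝ) s ⊆ Set.Icc (0:ℝ) 1 :=
      Set.Icc_subset_Icc le_rfl hsmem.2
    have hSclosed : IsClosed S := by
      have : S = Set.Icc (0:ℝ) s ∩ h' ⁻¹' Set.Ici 0 := by
        ext x; simp [hS, Set.mem_Ici, and_comm]
      rw [this]
      exact (hconth'.mono hIccsub).preimage_isClosed_of_isClosed isClosed_Icc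
        isClosed_Ici
    have hSne : S.Nonempty := ⟨u₀, hu₀, hu₀'⟩
    have hSbdd : BddAbove S := BddAbove.mono hSsub bddAbove_Icc
    obtain ⟨τ, hτeq, hτS⟩ : ∃ τ, τ = sSup S ∧ τ ∈ S :=
      ⟨_, rfl, hSclosed.csSup_mem hSne hSbdd⟩
    have hτs : τ < s := lt_of_le_of_ne hτS.1.2 (by rintro rfl; linarith [hτS.2])
    have hτ0 : 0 ≤ τ := hτS.1.1
    have hτsub : Set.Icc τ s ⊆ Set.Icc (0:ℝ) 1 :=
      Set.Icc_subset_Icc hτ0 hsmem.2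
    -- on (τ, s], h' < 0
    have hneg : ∀ x ∈ Set.Ioc τ s, h' x < 0 := by
      intro x hx
      by_contra hxx
      push_neg at hxx
      have : x ∈ S := ⟨⟨le_trans hτ0 (le_of_lt hx.1), hx.2⟩, hxx⟩
      exact absurd (hτeq ▸ le_csSup hSbdd this) (not_le.mpr hx.1)
    -- the function u = h' * exp(-K t) is monotone on [τ, s]
    set u : ℝ → ℝ := fun t => h' t * Real.exp (-K * t) with hu
    have hmono : MonotoneOn u (Set.Icc τ s) := by
      apply monotoneOn_of_deriv_nonneg (convex_Icc τ s)
      · exact ((hconth'.mono hτsub).mul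
          (Real.continuous_exp.comp (continuous_const.mul continuous_id)).continuousOn)
      · intro x hx
        rw [interior_Icc] at hx
        have hx1 : x ∈ Set.Icc (0:ℝ) 1 := hτsub ⟨le_of_lt hx.1, le_of_lt hx.2⟩
        exact ((hd2 x hx1).mul
          (((hasDerivAt_id x).const_mul (-K)).exp)).differentiableAt.differentiableWithinAt
      · intro x hx
        rw [interior_Icc] at hx
        have hx1 : x ∈ Set.Icc (0:ℝ) 1 := hτsub ⟨le_of_lt hx.1, le_of_lt hx.2⟩
        have hder : HasDerivAt u
            (h'' x * Real.exp (-K * x) + h' x * (Real.exp (-K * x) * (-K * 1))) x :=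
          (hd2 x hx1).mul (((hasDerivAt_id x).const_mul (-K)).exp)
        rw [hder.deriv]
        have hxneg : h' x < 0 := hneg x ⟨hx.1, le_of_lt hx.2⟩
        have habs : |h' x| = -h' x := abs_of_neg hxneg
        have := hineq x hx1
        rw [habs] at this
        have hexp : 0 < Real.exp (-K * x) := Real.exp_pos _
        nlinarith [hexp]
    have h1' : u τ ≤ u s := hmono (Set.left_mem_Icc.mpr (le_of_lt hτs))
      (Set.right_mem_Icc.mpr (le_of_lt hτs)) (le_of_lt hτs)
    have huτ : 0 ≤ u τ := mul_nonneg hτS.2 (le_of_lt (Real.exp_pos _))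
    have hus : u s < 0 := mul_neg_of_neg_of_pos hs_neg (Real.exp_pos _)
    linarith
  -- h is strictly decreasing on [0, s], so h 0 > h t₀ > 0, contradiction
  have hanti : StrictAntiOn h (Set.Icc 0 s) := by
    apply strictAntiOn_of_deriv_neg (convex_Icc 0 s)
      (hconth.mono (Set.Icc_subset_Icc le_rfl hsmem.2))
    intro x hx
    rw [interior_Icc] at hx
    have hx1 : x ∈ Set.Icc (0:ℝ) 1 :=
      ⟨le_of_lt hx.1, le_trans (le_of_lt hx.2) hsmem.2⟩
    rw [(hd1 x hx1).deriv]
    exact key x ⟨le_of_lt hx.1, le_of_lt hx.2⟩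
  have ht₀s : t₀ ∈ Set.Icc (0:ℝ) s := ⟨ht₀.1, le_of_lt hs.1⟩
  have : h t₀ < h 0 := hanti (Set.left_mem_Icc.mpr (le_trans ht₀.1 (le_of_lt hs.1)))
    ht₀s ht₀'.1
  linarith
end

section
/- Let h : [0,1] → ℝ be twice continuously differentiable with h(t) ≥ 0 for all t, and K ≥ 0 such that h''(t) ≥ -K·|h'(t)| for all t ∈ [0,1]. Then for every t₀ ∈ [0,1), one has h'(t₀)·(1 - t₀) ≤ e^K · h(1). -/
/-- Gradient estimate: if `h ≥ 0` on `[0,1]` and `h'' ≥ -K|h'|`, then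
`h'(t₀)(1 - t₀) ≤ e^K h(1)` for all `t₀ ∈ [0,1)`. -/
theorem stmt_1 (h h' h'' : ℝ → ℝ) (K : ℝ) (hK : 0 ≤ K)
    (hd1 : ∀ t ∈ Set.Icc (0:ℝ) 1, HasDerivAt h (h' t) t)
    (hd2 : ∀ t ∈ Set.Icc (0:ℝ) 1, HasDerivAt h' (h'' t) t)
    (hcont : ContinuousOn h'' (Set.Icc (0:ℝ) 1))
    (hnonneg : ∀ t ∈ Set.Icc (0:ℝ) 1, 0 ≤ h t)
    (hineq : ∀ t ∈ Set.Icc (0:ℝ) 1, h'' t ≥ -K * |h' t|) :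
    ∀ t₀ ∈ Set.Ico (0:ℝ) 1, h' t₀ * (1 - t₀) ≤ Real.exp K * h 1 := by
  intro t₀ ht₀
  obtain ⟨ht₀0, ht₀1⟩ := ht₀
  have h1mem : (1:ℝ) ∈ Set.Icc (0:ℝ) 1 := by constructor <;> norm_num
  have h1nn : 0 ≤ h 1 := hnonneg 1 h1mem
  by_cases hp : h' t₀ ≤ 0
  · have : h' t₀ * (1 - t₀) ≤ 0 := mul_nonpos_of_nonpos_of_nonneg hp (by linarith)
    have := Real.exp_pos K
    nlinarith
  push_neg at hp
  set g : ℝ → ℝ := fun t => Real.exp (K * t) * h' t with hg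
  have hc1 : ContinuousOn h' (Set.Icc (0:ℝ) 1) :=
    fun t ht => (hd2 t ht).continuousAt.continuousWithinAt
  have hgc : ContinuousOn g (Set.Icc (0:ℝ) 1) :=
    (Real.continuous_exp.comp (continuous_const.mul continuous_id)).continuousOn.mul hc1
  -- key monotonicity of g on intervals where h' > 0
  have key : ∀ a b : ℝ, 0 ≤ a → b ≤ 1 → a ≤ b →
      (∀ t ∈ Set.Ioo a b, 0 < h' t) → g a ≤ g b := by
    intro a b ha hb hab hpos
    have hsub : Set.Icc a b ⊆ Set.Icc (0:ℝ) 1 :=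
      Set.Icc_subset_Icc ha hb
    have hmono : MonotoneOn g (Set.Icc a b) := by
      apply monotoneOn_of_hasDerivWithinAt_nonneg (convex_Icc a b)
        (hgc.mono hsub)
        (f' := fun t => Real.exp (K * t) * K * h' t + Real.exp (K * t) * h'' t)
      · intro x hx
        rw [interior_Icc] at hx
        have hx01 : x ∈ Set.Icc (0:ℝ) 1 := hsub ⟨le_of_lt hx.1, le_of_lt hx.2⟩
        have hexp : HasDerivAt (fun t => Real.exp (K * t)) (Real.exp (K * x) * K) x := by
          have : HasDerivAt (fun t => K * t) K x := by
            simpa using (hasDerivAt_id x).const_mul K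
          exact this.exp
        exact ((hexp.mul (hd2 x hx01))).hasDerivWithinAt
      · intro x hx
        rw [interior_Icc] at hx
        have hx01 : x ∈ Set.Icc (0:ℝ) 1 := hsub ⟨le_of_lt hx.1, le_of_lt hx.2⟩
        have hpx : 0 < h' x := hpos x hx
        have habs : |h' x| = h' x := abs_of_pos hpx
        have := hineq x hx01
        rw [habs] at this
        have hep : 0 < Real.exp (K * x) := Real.exp_pos _
        nlinarith
    exact hmono ⟨le_refl a, hab⟩ ⟨hab, le_refl b⟩ hab
  -- h' > 0 on [t₀, 1]
  have pos : ∀ t ∈ Set.Icc t₀ 1, 0 < h' t := by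
    by_contra hcon
    push_neg at hcon
    obtain ⟨s, hs, hs0⟩ := hcon
    set S : Set ℝ := {t | t ∈ Set.Icc t₀ 1 ∧ h' t ≤ 0} with hS
    have hSne : S.Nonempty := ⟨s, hs, hs0⟩
    have hSbdd : BddBelow S := ⟨t₀, fun x hx => hx.1.1⟩
    have hSclosed : IsClosed S := by
      have : S = Set.Icc t₀ 1 ∩ h' ⁻¹' Set.Iic 0 := by
        ext x; simp [hS, Set.mem_Iic, and_comm]
      rw [this]
      have hsub : Set.Icc t₀ 1 ⊆ Set.Icc (0:ℝ) 1 := Set.Icc_subset_Icc ht₀0 le_rfl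
      exact (hc1.mono hsub).preimage_isClosed_of_isClosed isClosed_Icc isClosed_Iic
    set t₁ := sInf S with ht₁
    have ht₁S : t₁ ∈ S := hSclosed.csInf_mem hSne hSbdd
    have ht₁0 : t₀ ≤ t₁ := ht₁S.1.1
    have ht₁lt : t₀ < t₁ := lt_of_le_of_ne ht₁0 (by
      intro heq
      exact absurd ht₁S.2 (by rw [← heq]; linarith))
    have hposIoo : ∀ t ∈ Set.Ioo t₀ t₁, 0 < h' t := by
      intro t ht
      by_contra hle
      push_neg at hle
      have htS : t ∈ S := ⟨⟨le_of_lt ht.1, le_trans (le_of_lt ht.2) ht₁S.1.2⟩, hle⟩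
      exact absurd (csInf_le hSbdd htS) (not_le.mpr ht.2)
    have := key t₀ t₁ ht₀0 ht₁S.1.2 ht₁0 hposIoo
    have hgt₀ : 0 < g t₀ := mul_pos (Real.exp_pos _) hp
    have : 0 < g t₁ := lt_of_lt_of_le hgt₀ this
    have : 0 < h' t₁ := by
      by_contra hne
      push_neg at hne
      have : g t₁ ≤ 0 := mul_nonpos_of_nonneg_of_nonpos (le_of_lt (Real.exp_pos _)) hne
      linarith
    linarith [ht₁S.2]
  -- pointwise lower bound on h'
  set c : ℝ := Real.exp (-K) * h' t₀ with hc
  have hlow : ∀ t ∈ Set.Icc t₀ 1, c ≤ h' t := by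
    intro t ht
    have hkey : g t₀ ≤ g t := key t₀ t ht₀0 ht.2 ht.1
      (fun s hs => pos s ⟨le_of_lt hs.1, le_trans (le_of_lt hs.2) ht.2⟩)
    have hep : 0 < Real.exp (K * t) := Real.exp_pos _
    have h1 : Real.exp (K * t) * c ≤ Real.exp (K * t₀) * h' t₀ := by
      rw [hc, ← mul_assoc, ← Real.exp_add]
      have : K * t + -K ≤ K * t₀ := by
        nlinarith [mul_le_mul_of_nonneg_left ht.2 hK, mul_nonneg hK ht₀0]
      exact mul_le_mul_of_nonneg_right (Real.exp_le_exp.mpr this) (le_of_lt hp)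
    have h2 : Real.exp (K * t) * c ≤ Real.exp (K * t) * h' t := le_trans h1 hkey
    exact le_of_mul_le_mul_left h2 hep
  -- integrate: h 1 - h t₀ ≥ c (1 - t₀)
  have hφ : MonotoneOn (fun t => h t - c * t) (Set.Icc t₀ 1) := by
    have hsub : Set.Icc t₀ 1 ⊆ Set.Icc (0:ℝ) 1 := Set.Icc_subset_Icc ht₀0 le_rfl
    apply monotoneOn_of_hasDerivWithinAt_nonneg (convex_Icc t₀ 1)
      (f' := fun t => h' t - c)
    · exact ContinuousOn.sub
        (fun t ht => (hd1 t (hsub ht)).continuousAt.continuousWithinAt)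
        ((continuous_const.mul continuous_id).continuousOn)
    · intro x hx
      rw [interior_Icc] at hx
      exact ((hd1 x (hsub ⟨le_of_lt hx.1, le_of_lt hx.2⟩)).sub
        (by simpa using (hasDerivAt_id x).const_mul c)).hasDerivWithinAt
    · intro x hx
      rw [interior_Icc] at hx
      have := hlow x ⟨le_of_lt hx.1, le_of_lt hx.2⟩
      linarith
  have hfinal := hφ (Set.left_mem_Icc.mpr (le_of_lt ht₀1)) (Set.right_mem_Icc.mpr (le_of_lt ht₀1)) (le_of_lt ht₀1)
  simp only at hfinal
  have ht₀nn : 0 ≤ h t₀ := hnonneg t₀ ⟨ht₀0, le_of_lt ht₀1⟩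
  -- c * (1 - t₀) ≤ h 1
  have hcle : c * (1 - t₀) ≤ h 1 := by nlinarith
  have hee : Real.exp K * Real.exp (-K) = 1 := by
    rw [← Real.exp_add]; simp
  have heK : 0 < Real.exp K := Real.exp_pos K
  have heq : Real.exp K * (c * (1 - t₀)) = h' t₀ * (1 - t₀) := by
    rw [hc, show Real.exp K * (Real.exp (-K) * h' t₀ * (1 - t₀)) =
      Real.exp K * Real.exp (-K) * (h' t₀ * (1 - t₀)) from by ring, hee, one_mul]
  linarith [mul_le_mul_of_nonneg_left hcle (le_of_lt heK)]
end

section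
/- With the generating-function duality setup (G strictly decreasing in z with inverse H; Φ, Ψ as above): suppose u : X → ℝ is G-convex, i.e., for every x₀ ∈ X there exist y₀ ∈ Y and z₀ ∈ I with u(x₀) = G(x₀,y₀,z₀) and u(x) ≥ G(x,y₀,z₀) for all x ∈ X. Then Ψ(Φu) = u, i.e., u coincides with its double G-transform. -/
/-- A `G`-convex function coincides with its double `G`-transform: `Ψ(Φu) = u`. -/
theorem stmt_8 {X Y : Type*} [Nonempty X] [Nonempty Y]
    (G H : X → Y → ℝ → ℝ)
    (hGanti : ∀ x y, StrictAnti (G x y)) (hHanti : ∀ x y, StrictAnti (H x y))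
    (hGH : ∀ x y u, G x y (H x y u) = u) (hHG : ∀ x y z, H x y (G x y z) = z)
    (hbddH : ∀ (u : X → ℝ) (y : Y), BddAbove (Set.range fun x => H x y (u x)))
    (hbddG : ∀ (v : Y → ℝ) (x : X), BddAbove (Set.range fun y => G x y (v y)))
    (u : X → ℝ)
    (hconv : ∀ x₀ : X, ∃ (y₀ : Y) (z₀ : ℝ),
      u x₀ = G x₀ y₀ z₀ ∧ ∀ x : X, G x y₀ z₀ ≤ u x) :
    ∀ x : X, (⨆ y : Y, G x y (⨆ x' : X, H x' y (u x'))) = u x := by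
  intro x
  set v : Y → ℝ := fun y => ⨆ x' : X, H x' y (u x') with hv
  apply le_antisymm
  · apply ciSup_le
    intro y
    have h1 : H x y (u x) ≤ v y := le_ciSup (hbddH u y) x
    calc G x y (v y) ≤ G x y (H x y (u x)) := (hGanti x y).antitone h1
      _ = u x := hGH x y (u x)
  · obtain ⟨y₀, z₀, he, hle⟩ := hconv x
    have hvle : v y₀ ≤ z₀ := by
      apply ciSup_le
      intro x'
      calc H x' y₀ (u x') ≤ H x' y₀ (G x' y₀ z₀) := (hHanti x' y₀).antitone (hle x')
        _ = z₀ := hHG x' y₀ z₀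
    calc u x = G x y₀ z₀ := he
      _ ≤ G x y₀ (v y₀) := (hGanti x y₀).antitone hvle
      _ ≤ _ := le_ciSup (hbddG v x) y₀
end

section
/- With the generating-function duality setup: let u : X → ℝ be G-convex and v = Φu its G-transform. If y₀ belongs to the G-normal mapping Tu(x₀), i.e., u(x) ≥ G(x, y₀, H(x₀,y₀,u(x₀))) for all x ∈ X, then v(y₀) = H(x₀, y₀, u(x₀)) and x₀ belongs to the dual normal mapping T*v(y₀), i.e., v(y) ≥ H(x₀, y, G(x₀,y₀,v(y₀))) for all y ∈ Y. -/
/-- Duality of normal mappings: if `y₀ ∈ Tu(x₀)` then `v(y₀) = H(x₀,y₀,u(x₀))`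
and `x₀ ∈ T*v(y₀)`, where `v = Φu` is the `G`-transform of `u`. -/
theorem stmt_9 {X Y : Type*} [Nonempty X] [Nonempty Y]
    (G H : X → Y → ℝ → ℝ)
    (hGanti : ∀ x y, StrictAnti (G x y)) (hHanti : ∀ x y, StrictAnti (H x y))
    (hGH : ∀ x y u, G x y (H x y u) = u) (hHG : ∀ x y z, H x y (G x y z) = z)
    (u : X → ℝ)
    (hbddH : ∀ y : Y, BddAbove (Set.range fun x => H x y (u x)))
    (x₀ : X) (y₀ : Y)
    (hnormal : ∀ x : X, G x y₀ (H x₀ y₀ (u x₀)) ≤ u x) :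
    (⨆ x : X, H x y₀ (u x)) = H x₀ y₀ (u x₀) ∧
      ∀ y : Y, H x₀ y (G x₀ y₀ (⨆ x : X, H x y₀ (u x))) ≤ ⨆ x : X, H x y (u x) := by
  have hle : ∀ x : X, H x y₀ (u x) ≤ H x₀ y₀ (u x₀) := by
    intro x
    have := (hHanti x y₀).antitone (hnormal x)
    rwa [hHG] at this
  have hsup : (⨆ x : X, H x y₀ (u x)) = H x₀ y₀ (u x₀) :=
    le_antisymm (ciSup_le hle) (le_ciSup (hbddH y₀) x₀)
  refine ⟨hsup, fun y => ?_⟩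
  rw [hsup, hGH]
  exact le_ciSup (hbddH y) x₀
end
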